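/- Let C be a full-dimensional pointed closed convex cone in ℝ^d, let Γ be the set of points of C lying outside some (possibly empty) truncation of C, let V be a countable subset of C, and let U = V + Γ be the Minkowski sum. Then the topological boundary ∂U of U has Lebesgue measure zero. -/

import Mathlib

open Filter MeasureTheory
open scoped Pointwise

/-!
If `S + C ⊆ S` for a cone `C` with an interior point `w`, then `closure S + interior C` lies in
`interior S`, so no two points of `∂S` differ by a positive multiple of `w`. Hence the translates
`(n + 1)⁻¹ • w + ∂S` are pairwise disjoint, and a set with infinitely many disjoint translates by a
bounded family of vectors is Haar-null. Here `S = V + Γ` absorbs `C` because `Γ + C ⊆ Γ`, and a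
full-dimensional convex cone has nonempty interior.
-/

/-- The standard inner product of two vectors of `ℝ^d`. -/
def pairing {d : ℕ} (u a : Fin d → ℝ) : ℝ := ∑ i, u i * a i

open Set

theorem pairing_add_left {d : ℕ} (u v a : Fin d → ℝ) :
    pairing (u + v) a = pairing u a + pairing v a :=
  add_dotProduct u v a

theorem setOf_not_pairing_lt_add_subset {d : ℕ} {C : Set (Fin d → ℝ)}
    (hCadd : ∀ u ∈ C, ∀ v ∈ C, u + v ∈ C) {a : Fin d → ℝ} (ha : ∀ u ∈ C, 0 ≤ pairing u a)
    (α : ℝ) : {u ∈ C | ¬ pairing u a < α} + C ⊆ {u ∈ C | ¬ pairing u a < α} := by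
  rintro _ ⟨u, ⟨huC, hu⟩, c, hc, rfl⟩
  refine ⟨hCadd u huC c hc, ?_⟩
  rw [pairing_add_left]
  linarith [not_lt.mp hu, ha c hc]

theorem Convex.interior_nonempty_of_span_eq_top {E : Type*} [NormedAddCommGroup E]
    [NormedSpace ℝ E] [FiniteDimensional ℝ E] {C : Set E} (hC : Convex ℝ C) (h0 : 0 ∈ C)
    (hspan : Submodule.span ℝ C = ⊤) : (interior C).Nonempty := by
  rw [hC.interior_nonempty_iff_affineSpan_eq_top, ← AffineSubspace.coe_eq_univ_iff,
    ← insert_eq_of_mem h0, affineSpan_insert_zero, hspan, Submodule.top_coe]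

section Absorbing

variable {G : Type*} [AddCommGroup G] [TopologicalSpace G] [IsTopologicalAddGroup G] {S K : Set G}

theorem closure_add_interior_subset_interior (hS : S + K ⊆ S) :
    closure S + interior K ⊆ interior S := by
  rw [isOpen_interior.closure_add]
  exact subset_interior_add_right.trans (interior_mono hS)

theorem sub_notMem_interior_of_mem_frontier (hS : S + K ⊆ S) {x y : G} (hx : x ∈ frontier S)
    (hy : y ∈ frontier S) : x - y ∉ interior K := fun hxy =>
  hx.2 <| by
    simpa only [add_sub_cancel] using
      closure_add_interior_subset_interior hS (add_mem_add hy.1 hxy)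

end Absorbing

section Cone

variable {E : Type*} [NormedAddCommGroup E] [NormedSpace ℝ E] {S K : Set E}

theorem smul_mem_interior_of_smul_mem (hK : ∀ t : ℝ, 0 < t → ∀ c ∈ K, t • c ∈ K) {t : ℝ}
    (ht : 0 < t) {c : E} (hc : c ∈ interior K) : t • c ∈ interior K := by
  have hsub : t • K ⊆ K := smul_set_subset_iff.2 fun c hc => hK t ht c hc
  apply interior_mono hsub
  rw [interior_smul₀ ht.ne']
  exact smul_mem_smul_set hc

theorem smul_add_ne_of_mem_frontier (hS : S + K ⊆ S) (hK : ∀ t : ℝ, 0 < t → ∀ c ∈ K, t • c ∈ K)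
    {w : E} (hw : w ∈ interior K) {s t : ℝ} (hst : s < t) {x y : E} (hx : x ∈ frontier S)
    (hy : y ∈ frontier S) : s • w + x ≠ t • w + y := by
  intro h
  have hxy : x - y = (t - s) • w := by linear_combination (norm := module) h
  exact sub_notMem_interior_of_mem_frontier hS hx hy
    (hxy ▸ smul_mem_interior_of_smul_mem hK (sub_pos.2 hst) hw)

theorem addHaar_frontier_eq_zero_of_add_subset [MeasurableSpace E] [BorelSpace E]
    [FiniteDimensional ℝ E] (μ : Measure E) [μ.IsAddHaarMeasure] (hS : S + K ⊆ S)
    (hK : ∀ t : ℝ, 0 < t → ∀ c ∈ K, t • c ∈ K) (hKint : (interior K).Nonempty) :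
    μ (frontier S) = 0 := by
  obtain ⟨w, hw⟩ := hKint
  have hanti : StrictAnti fun n : ℕ => ((n : ℝ) + 1)⁻¹ := fun m n hmn => by
    dsimp only
    gcongr
  refine Measure.addHaar_eq_zero_of_disjoint_translates μ (fun n : ℕ => ((n : ℝ) + 1)⁻¹ • w)
    ?_ ?_ isClosed_frontier.measurableSet
  · refine Bornology.IsBounded.subset (Metric.isBounded_closedBall (x := 0) (r := ‖w‖)) ?_
    rintro _ ⟨n, rfl⟩
    rw [mem_closedBall_zero_iff, norm_smul, Real.norm_of_nonneg (by positivity)]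
    exact mul_le_of_le_one_left (norm_nonneg w) (inv_le_one_of_one_le₀ (by simp))
  · intro m n hmn
    rw [Function.onFun, disjoint_left]
    rintro _ ⟨_, rfl, x, hx, rfl⟩ ⟨_, rfl, y, hy, hyx⟩
    rcases hmn.lt_or_gt with h | h
    · exact smul_add_ne_of_mem_frontier hS hK hw (hanti h) hy hx hyx
    · exact smul_add_ne_of_mem_frontier hS hK hw (hanti h) hx hy hyx.symm

end Cone

theorem boundary_measure_zero_general
    (d : ℕ) (C : Set (Fin d → ℝ))
    (hCsmul : ∀ c : ℝ, 0 ≤ c → ∀ u ∈ C, c • u ∈ C)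
    (hCadd : ∀ u ∈ C, ∀ v ∈ C, u + v ∈ C)
    (hfull : Submodule.span ℝ C = ⊤)
    (a : Fin d → ℝ) (ha : ∀ u ∈ C, u ≠ 0 → 0 < pairing u a)
    (α : ℝ)
    (Γ : Set (Fin d → ℝ)) (hΓ : Γ = {u ∈ C | ¬ pairing u a < α})
    (V : Set (Fin d → ℝ))
    (U : Set (Fin d → ℝ)) (hU : U = V + Γ) :
    volume (frontier U) = 0 := by
  obtain rfl | ⟨u₀, hu₀⟩ := C.eq_empty_or_nonempty
  · simp [hU, hΓ]
  have hpairing : ∀ u ∈ C, 0 ≤ pairing u a := fun u hu => by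
    rcases eq_or_ne u 0 with rfl | hne
    · simp [pairing]
    · exact (ha u hu hne).le
  have hconv : Convex ℝ C := fun x hx y hy s t hs ht _ =>
    hCadd _ (hCsmul s hs x hx) _ (hCsmul t ht y hy)
  have h0 : (0 : Fin d → ℝ) ∈ C := by simpa using hCsmul 0 le_rfl u₀ hu₀
  refine addHaar_frontier_eq_zero_of_add_subset volume (K := C) ?_ (fun t ht => hCsmul t ht.le)
    (hconv.interior_nonempty_of_span_eq_top h0 hfull)
  rw [hU, hΓ, add_assoc]
  exact add_subset_add_left (setOf_not_pairing_lt_add_subset hCadd hpairing α)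

/-- for `U = V + Γ` with `V ⊆ C` countable and `Γ` the points of `C` outside
a (possibly empty) truncation of `C`, the boundary of `U` has Lebesgue measure zero. -/
theorem boundary_measure_zero
    (d : ℕ) (C : Set (Fin d → ℝ))
    (hCclosed : IsClosed C)
    (hCsmul : ∀ c : ℝ, 0 ≤ c → ∀ u ∈ C, c • u ∈ C)
    (hCadd : ∀ u ∈ C, ∀ v ∈ C, u + v ∈ C)
    (hfull : Submodule.span ℝ C = ⊤)
    (a : Fin d → ℝ) (ha : ∀ u ∈ C, u ≠ 0 → 0 < pairing u a)
    (α : ℝ) (hα : 0 ≤ α)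
    (Γ : Set (Fin d → ℝ)) (hΓ : Γ = {u ∈ C | ¬ pairing u a < α})
    (V : Set (Fin d → ℝ)) (hVC : V ⊆ C) (hVcnt : V.Countable)
    (U : Set (Fin d → ℝ)) (hU : U = V + Γ) :
    volume (frontier U) = 0 :=
  boundary_measure_zero_general d C hCsmul hCadd hfull a ha α Γ hΓ V U hU
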